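/- Let F be an (N-1) × N matrix over GF(2) with columns f_1, ..., f_N, and for each i let F_i denote the (N-1) × (N-1) matrix obtained from F by deleting column i. Fix an index i such that F_i is invertible. Then f_i equals the sum (in GF(2)) of all other columns f_k, k ≠ i, if and only if F_j is invertible for every j ∈ {1, ..., N}. -/
import Mathlib

private lemma bmnc_key (n : ℕ) (F : Matrix (Fin n) (Fin (n + 1)) (ZMod 2))
    (j : Fin (n + 1)) (hFj : IsUnit (F.submatrix id j.succAbove))
    (x : Fin (n + 1) → ZMod 2) (hx : F.mulVec x = 0) (hxj : x j = 0) : x = 0 := by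
  set M := F.submatrix id j.succAbove with hM
  have hMy : M.mulVec (fun k => x (j.succAbove k)) = 0 := by
    funext r
    have h0 := congrFun hx r
    simp only [Matrix.mulVec, dotProduct, Pi.zero_apply] at h0 ⊢
    rw [Fin.sum_univ_succAbove (fun l => F r l * x l) j, hxj, mul_zero, zero_add] at h0
    simpa [hM, Matrix.submatrix] using h0
  have hy : (fun k => x (j.succAbove k)) = 0 := by
    have hdet : IsUnit M.det := (Matrix.isUnit_iff_isUnit_det M).1 hFj
    have := congrArg (fun v => (M⁻¹).mulVec v) hMy
    simpa [Matrix.mulVec_mulVec, Matrix.nonsing_inv_mul M hdet] using this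
  funext l
  rcases eq_or_ne l j with rfl | hl
  · exact hxj
  · obtain ⟨k, hk⟩ := Fin.exists_succAbove_eq hl
    rw [← hk]
    exact congrFun hy k

private lemma bmnc_ker (n : ℕ) (F : Matrix (Fin n) (Fin (n + 1)) (ZMod 2)) :
    ∃ x ≠ 0, F.mulVec x = 0 := by
  by_contra h
  push_neg at h
  have hinj : Function.Injective F.mulVecLin := by
    rw [← LinearMap.ker_eq_bot, eq_bot_iff]
    intro x hx
    simp only [LinearMap.mem_ker, Matrix.mulVecLin_apply] at hx
    by_contra hx0
    exact (h x (by simpa using hx0)) hx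
  have := LinearMap.finrank_le_finrank_of_injective hinj
  simp [Module.finrank_pi] at this

/-- Theorem 1 of the paper: if `F_i` is full rank, then `f_i = ∑_{k ≠ i} f_k` (in GF(2))
iff `F_j` is full rank for every `j`. Here `F` is an `(N-1) × N` matrix over GF(2), modeled
with `N = n + 1`, and `F_j` is `F` with column `j` deleted, i.e. `F.submatrix id j.succAbove`. -/
theorem bmnc_full_rank_iff (n : ℕ) (hn : 1 ≤ n)
    (F : Matrix (Fin n) (Fin (n + 1)) (ZMod 2)) (i : Fin (n + 1))
    (hFi : IsUnit (F.submatrix id i.succAbove)) :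
    (∀ r, F r i = ∑ k ∈ Finset.univ.erase i, F r k) ↔
      ∀ j : Fin (n + 1), IsUnit (F.submatrix id j.succAbove) := by
  have hcond : (∀ r, F r i = ∑ k ∈ Finset.univ.erase i, F r k) ↔ F.mulVec 1 = 0 := by
    constructor
    · intro h
      funext r
      simp only [Matrix.mulVec, dotProduct, Pi.one_apply, mul_one, Pi.zero_apply]
      rw [← Finset.add_sum_erase _ _ (Finset.mem_univ i), h r, CharTwo.add_self_eq_zero]
    · intro h r
      have h0 := congrFun h r
      simp only [Matrix.mulVec, dotProduct, Pi.one_apply, mul_one, Pi.zero_apply] at h0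
      rw [← Finset.add_sum_erase _ _ (Finset.mem_univ i)] at h0
      have := eq_neg_of_add_eq_zero_left h0
      rwa [CharTwo.neg_eq] at this
  rw [hcond]
  constructor
  · -- sum of columns zero → every F_j invertible
    intro h1 j
    rw [Matrix.isUnit_iff_isUnit_det, isUnit_iff_ne_zero]
    intro hdet
    obtain ⟨y, hy0, hy⟩ := (Matrix.exists_mulVec_eq_zero_iff).2 hdet
    set x : Fin (n + 1) → ZMod 2 := j.insertNth 0 y with hxdef
    have hxj : x j = 0 := by simp [hxdef]
    have hxy : ∀ k, x (j.succAbove k) = y k := fun k => by simp [hxdef]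
    have hx : F.mulVec x = 0 := by
      funext r
      have h0 := congrFun hy r
      simp only [Matrix.mulVec, dotProduct, Pi.zero_apply,
        Matrix.submatrix_apply, id] at h0 ⊢
      rw [Fin.sum_univ_succAbove (fun l => F r l * x l) j, hxj, mul_zero, zero_add]
      simpa [hxy] using h0
    rcases eq_or_ne (x i) 0 with hxi | hxi
    · have := bmnc_key n F i hFi x hx hxi
      apply hy0
      funext k
      simpa [hxy] using congrFun this (j.succAbove k)
    · have hz : F.mulVec (x + 1) = 0 := by
        rw [Matrix.mulVec_add, hx, h1, add_zero]
      have hzi : (x + 1) i = 0 := by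
        have : x i = 1 := by
          have h01 : ∀ a : ZMod 2, a = 0 ∨ a = 1 := by decide
          rcases h01 (x i) with h | h
          · exact absurd h hxi
          · exact h
        simp [this, CharTwo.add_self_eq_zero]
      have hz0 := bmnc_key n F i hFi (x + 1) hz hzi
      have := congrFun hz0 j
      simp [hxj] at this
  · -- every F_j invertible → sum of columns zero
    intro hall
    obtain ⟨x, hx0, hx⟩ := bmnc_ker n F
    have h1 : ∀ j, x j = 1 := by
      intro j
      by_contra hj
      have hxj : x j = 0 := by
        have h01 : ∀ a : ZMod 2, a = 0 ∨ a = 1 := by decide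
        rcases h01 (x j) with h | h
        · exact h
        · exact absurd h hj
      exact hx0 (bmnc_key n F j (hall j) x hx hxj)
    have : x = 1 := funext fun j => h1 j
    rwa [this] at hx
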